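/- arXiv:2405.05525 — 4 statements merged into one kernel-verified Lean document; each statement's English description precedes it below -/
import Mathlib

section
/- Let t = f - f' > 0, ℓ' < ℓ - t, and x₀, x₁, x₂ ∈ [0, 2^ℓ) with x₀ + x₁ + x₂ ≡ x (mod 2^ℓ), where x ∈ [0, 2^ℓ). Then there exists w' ∈ {0, 1, 2} such that ⌊x/2^t⌋ ≡ ⌊x₀/2^t⌋ + ⌊x₁/2^t⌋ + ⌊x₂/2^t⌋ + w' (mod 2^{ℓ'}). -/
/-!
Write `d = 2^t`. Since `2^ℓ = d · 2^(ℓ-t)`, a congruence modulo `2^ℓ` survives division by `d`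
as a congruence modulo `2^(ℓ-t)`, hence modulo `2^ℓ'`. So `⌊x/d⌋ ≡ ⌊(x₀+x₁+x₂)/d⌋`, and the
latter exceeds `⌊x₀/d⌋ + ⌊x₁/d⌋ + ⌊x₂/d⌋` by the carries of the two additions, each `0` or `1`.
-/

theorem Int.ModEq.ediv_of_mul {m n a b : ℤ} (h : a ≡ b [ZMOD m * n]) :
    a / m ≡ b / m [ZMOD n] := by
  rcases eq_or_ne m 0 with rfl | hm
  · simp [Int.ModEq.refl]
  obtain ⟨k, hk⟩ := Int.modEq_iff_dvd.1 h
  have hb : b = a + n * k * m := by linear_combination hk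
  rw [Int.modEq_iff_dvd, hb, Int.add_mul_ediv_right _ _ hm]
  exact ⟨k, by ring⟩

theorem Int.exists_ediv_add_add_eq_add_carry {d : ℤ} (hd : 0 < d) (a b c : ℤ) :
    ∃ w : ℤ, (w = 0 ∨ w = 1 ∨ w = 2) ∧ (a + b + c) / d = a / d + b / d + c / d + w := by
  rw [Int.add_ediv_of_pos hd, Int.add_ediv_of_pos hd]
  refine ⟨(if d ≤ a % d + b % d then 1 else 0) + (if d ≤ (a + b) % d + c % d then 1 else 0),
    ?_, by ring⟩
  split_ifs <;> simp

theorem stmt2_general (ℓ ℓ' t : ℕ)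
    (hℓ : ℓ' < ℓ - t)
    (x x₀ x₁ x₂ : ℤ)
    (hcong : (x₀ + x₁ + x₂) % 2 ^ ℓ = x % 2 ^ ℓ) :
    ∃ w' : ℤ, (w' = 0 ∨ w' = 1 ∨ w' = 2) ∧
      (x / 2 ^ t) % 2 ^ ℓ' = (x₀ / 2 ^ t + x₁ / 2 ^ t + x₂ / 2 ^ t + w') % 2 ^ ℓ' := by
  obtain ⟨w, hw, hcarry⟩ :=
    Int.exists_ediv_add_add_eq_add_carry (by positivity : (0 : ℤ) < 2 ^ t) x₀ x₁ x₂
  refine ⟨w, hw, ?_⟩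
  have hsplit : x₀ + x₁ + x₂ ≡ x [ZMOD 2 ^ t * 2 ^ (ℓ - t)] := by
    rwa [← pow_add, Nat.add_sub_cancel' (by omega)]
  have hshift := hsplit.ediv_of_mul.of_dvd (pow_dvd_pow 2 hℓ.le)
  rw [hcarry] at hshift
  exact hshift.symm

/-- Downcast with truncation: local right-shift of the shares is correct up to a carry
w' ∈ {0,1,2} modulo 2^ℓ'. -/
theorem stmt2 (ℓ ℓ' f f' t : ℕ) (ht : t = f - f') (htpos : 0 < t) (hff' : f' < f)
    (hℓ : ℓ' < ℓ - t)
    (x x₀ x₁ x₂ : ℤ)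
    (hx : 0 ≤ x ∧ x < 2 ^ ℓ)
    (h₀ : 0 ≤ x₀ ∧ x₀ < 2 ^ ℓ) (h₁ : 0 ≤ x₁ ∧ x₁ < 2 ^ ℓ) (h₂ : 0 ≤ x₂ ∧ x₂ < 2 ^ ℓ)
    (hcong : (x₀ + x₁ + x₂) % 2 ^ ℓ = x % 2 ^ ℓ) :
    ∃ w' : ℤ, (w' = 0 ∨ w' = 1 ∨ w' = 2) ∧
      (x / 2 ^ t) % 2 ^ ℓ' = (x₀ / 2 ^ t + x₁ / 2 ^ t + x₂ / 2 ^ t + w') % 2 ^ ℓ' :=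
  stmt2_general ℓ ℓ' t hℓ x x₀ x₁ x₂ hcong
end

section
/- Let x ∈ [0, 2^{ℓ-1}) (i.e., the most significant bit of x as an ℓ-bit integer is 0) and r ∈ [0, 2^ℓ). Let y = (x + r) mod 2^ℓ. Then x + r ≥ 2^ℓ if and only if the (ℓ-1)-th bit of r is 1 and the (ℓ-1)-th bit of y is 0. Equivalently, the wrap bit ŵ equals r_{ℓ-1} ∧ ¬y_{ℓ-1}. -/
lemma div_one_aux (H a : ℤ) (h0 : 0 < H) (h1 : H ≤ a) (h2 : a < 2 * H) :
    a / H = 1 := by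
  have : (a - H + 1 * H) / H = (a - H) / H + 1 := Int.add_mul_ediv_right _ 1 h0.ne'
  have hz : (a - H) / H = 0 := Int.ediv_eq_zero_of_lt (by omega) (by omega)
  have ha : a - H + 1 * H = a := by ring
  rw [ha, hz] at this
  omega

/-- Wrap-bit formula: for x with MSB zero, x + r wraps around 2^ℓ iff
the MSB of r is 1 and the MSB of y = (x+r) mod 2^ℓ is 0. -/
theorem stmt4 (ℓ : ℕ) (hℓ : 1 ≤ ℓ) (x r : ℤ)
    (hx : 0 ≤ x ∧ x < 2 ^ (ℓ - 1)) (hr : 0 ≤ r ∧ r < 2 ^ ℓ)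
    (y : ℤ) (hy : y = (x + r) % 2 ^ ℓ) :
    2 ^ ℓ ≤ x + r ↔ (r / 2 ^ (ℓ - 1)) % 2 = 1 ∧ (y / 2 ^ (ℓ - 1)) % 2 = 0 := by
  set H : ℤ := 2 ^ (ℓ - 1) with hHdef
  have hH : 0 < H := by positivity
  have h2 : (2 : ℤ) ^ ℓ = 2 * H := by
    rw [hHdef, ← pow_succ']
    congr 1
    omega
  rw [h2] at hr hy ⊢
  obtain ⟨hx0, hx1⟩ := hx
  obtain ⟨hr0, hr1⟩ := hr
  by_cases hw : 2 * H ≤ x + r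
  · have hyv : y = x + r - 2 * H := by
      have h1 : (x + r - 2 * H) % (2 * H) = x + r - 2 * H :=
        Int.emod_eq_of_lt (by omega) (by omega)
      have h2' : (x + r) % (2 * H) = (x + r - 2 * H + 2 * H * 1) % (2 * H) := by
        ring_nf
      rw [hy, h2', Int.add_mul_emod_self_left, h1]
    have hr' : r / H = 1 := div_one_aux H r hH (by omega) (by omega)
    have hy' : y / H = 0 := Int.ediv_eq_zero_of_lt (by omega) (by omega)
    simp [hw, hr', hy']
  · have hyv : y = x + r := by
      rw [hy]; exact Int.emod_eq_of_lt (by omega) (by omega)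
    by_cases hrH : H ≤ r
    · have hy' : y / H = 1 := div_one_aux H y hH (by omega) (by omega)
      simp [hw, hy']
    · have hr' : r / H = 0 := Int.ediv_eq_zero_of_lt (by omega) (by omega)
      simp [hw, hr']
end

section
/- Let ℓ < ℓ', x ∈ [0, 2^{ℓ-1}), r ∈ [0, 2^ℓ), y = (x + r) mod 2^ℓ, and ŵ = r_{ℓ-1} ∧ ¬y_{ℓ-1} (as a bit in {0,1}). Then (y - r + ŵ · 2^ℓ) mod 2^{ℓ'} = x. -/
/-!
Write `a = 2^(ℓ-1)`. Since `x < a`, adding `r` to `x` modulo `2a` overflows exactly when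
the top bit of `r` is set and that of `y` is not: without overflow `y = x + r ≥ r`, with
overflow `y = x + r - 2a < a ≤ r`. Hence `ŵ` is the carry `(x + r) / 2a`, and
`y - r + ŵ · 2a = x` exactly, before any reduction modulo `2^ℓ'`.
-/

theorem Int.ediv_emod_two_eq_one_iff {a z : ℤ} (ha : 0 < a) (hz0 : 0 ≤ z) (hz : z < 2 * a) :
    z / a % 2 = 1 ↔ a ≤ z := by
  have hlt : z / a < 2 := Int.ediv_lt_of_lt_mul ha (by linarith)
  have hnonneg : 0 ≤ z / a := Int.ediv_nonneg hz0 ha.le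
  have hone : 1 ≤ z / a ↔ a ≤ z := by rw [Int.le_ediv_iff_mul_le ha, one_mul]
  omega

theorem Int.add_ediv_two_mul_eq_ite_msb {a x r : ℤ} (ha : 0 < a) (hx : 0 ≤ x ∧ x < a)
    (hr : 0 ≤ r ∧ r < 2 * a) :
    (x + r) / (2 * a) =
      if r / a % 2 = 1 ∧ (x + r) % (2 * a) / a % 2 = 0 then 1 else 0 := by
  have h2a : 0 < 2 * a := by linarith
  set y := (x + r) % (2 * a)
  set c := (x + r) / (2 * a)
  have hyc : y = x + r - 2 * a * c := Int.emod_def _ _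
  have hy0 : 0 ≤ y := Int.emod_nonneg _ h2a.ne'
  have hy2 : y < 2 * a := Int.emod_lt_of_pos _ h2a
  have hmsb_r := Int.ediv_emod_two_eq_one_iff ha hr.1 hr.2
  have hmsb_y := Int.ediv_emod_two_eq_one_iff ha hy0 hy2
  have hc01 : c = 0 ∨ c = 1 := by
    have hlt : c < 2 := Int.ediv_lt_of_lt_mul h2a (by linarith)
    have hnonneg : 0 ≤ c := Int.ediv_nonneg (by linarith) h2a.le
    omega
  rcases hc01 with hc | hc <;> rw [hc] at hyc ⊢ <;> split_ifs <;> omega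

/-- End-to-end correctness of the UpCast core computation. -/
theorem stmt6 (ℓ ℓ' : ℕ) (hℓ : ℓ < ℓ') (hℓ1 : 1 ≤ ℓ) (x r : ℤ)
    (hx : 0 ≤ x ∧ x < 2 ^ (ℓ - 1)) (hr : 0 ≤ r ∧ r < 2 ^ ℓ)
    (y w : ℤ) (hy : y = (x + r) % 2 ^ ℓ)
    (hw : w = if (r / 2 ^ (ℓ - 1)) % 2 = 1 ∧ (y / 2 ^ (ℓ - 1)) % 2 = 0 then 1 else 0) :
    (y - r + w * 2 ^ ℓ) % 2 ^ ℓ' = x := by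
  obtain ⟨k, rfl⟩ : ∃ k, ℓ = k + 1 := ⟨ℓ - 1, by omega⟩
  rw [Nat.add_sub_cancel] at hx hw
  rw [pow_succ'] at hr hy ⊢
  have hcarry : w = (x + r) / (2 * 2 ^ k) := by
    rw [hw, hy, Int.add_ediv_two_mul_eq_ite_msb (by positivity) hx hr]
  have hexact : y - r + w * (2 * 2 ^ k) = x := by
    rw [hcarry, hy, Int.emod_def]
    ring
  have hxℓ' : x < 2 ^ ℓ' :=
    hx.2.trans_le (pow_le_pow_right₀ (by norm_num) (by omega))
  rw [hexact, Int.emod_eq_of_lt hx.1 hxℓ']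
end

section
/- If x ∈ [-2^{ℓ-2}, 2^{ℓ-2}-1] is upcast via the biased protocol (compute UpCast of x + 2^{ℓ-2} over Z_{2^ℓ} into Z_{2^{ℓ'}}, then subtract 2^{ℓ-2}), the result equals the two's-complement representation of x over Z_{2^{ℓ'}}: that is, (UpCast((x + 2^{ℓ-2}) mod 2^ℓ) − 2^{ℓ-2}) mod 2^{ℓ'} = x mod 2^{ℓ'}. -/
/-!
With the bias `2^(ℓ-2)` added, `b = x + 2^(ℓ-2)` lies in `[0, 2^(ℓ-1))`, i.e. its most significant
bit is `0`. Masking it as `y = (b + r) mod 2^ℓ`, the sum wraps around exactly when the MSB of `r`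
is `1` and that of `y` is `0`, so `y - r + w·2^ℓ` is `b` itself as an integer. Since `b < 2^ℓ'`,
the upcast value is `b`, and subtracting the bias gives `x` modulo `2^ℓ'`.
-/

namespace Int

theorem ediv_emod_two_eq_one_iff_le {a H : ℤ} (hH : 0 < H) (ha₀ : 0 ≤ a) (ha : a < 2 * H) :
    a / H % 2 = 1 ↔ H ≤ a := by
  have hlt : a / H < 2 := (Int.ediv_lt_iff_lt_mul hH).2 (by linarith)
  have hnonneg : 0 ≤ a / H := ediv_nonneg ha₀ hH.le
  have hone : 1 ≤ a / H ↔ 1 * H ≤ a := Int.le_ediv_iff_mul_le hH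
  omega

theorem emod_sub_add_wrap_eq {b r H : ℤ} (hH : 0 < H) (hb₀ : 0 ≤ b) (hb : b < H)
    (hr₀ : 0 ≤ r) (hr : r < 2 * H) :
    (b + r) % (2 * H) - r
      + (if r / H % 2 = 1 ∧ (b + r) % (2 * H) / H % 2 = 0 then 1 else 0) * (2 * H) = b := by
  have hr_msb := ediv_emod_two_eq_one_iff_le hH hr₀ hr
  by_cases hwrap : b + r < 2 * H
  · have hy : (b + r) % (2 * H) = b + r := emod_eq_of_lt (by omega) hwrap
    have hy_msb := ediv_emod_two_eq_one_iff_le hH (a := b + r) (by omega) hwrap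
    rw [hy, if_neg (by omega)]
    omega
  · have hy : (b + r) % (2 * H) = b + r - 2 * H := by
      rw [← sub_emod_right]
      exact emod_eq_of_lt (by omega) (by omega)
    have hy_msb := ediv_emod_two_eq_one_iff_le hH (a := b + r - 2 * H) (by omega) (by omega)
    rw [hy, if_pos (by omega)]
    omega

end Int

/-- Bias elimination after upcast: upcasting the biased value and subtracting the bias
recovers the two's-complement representation of x over the larger ring. -/
theorem stmt17 (ℓ ℓ' : ℕ) (hℓ2 : 2 ≤ ℓ) (hℓ : ℓ < ℓ') (x : ℤ)
    (hx : -2 ^ (ℓ - 2) ≤ x ∧ x ≤ 2 ^ (ℓ - 2) - 1)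
    (r : ℤ) (hr : 0 ≤ r ∧ r < 2 ^ ℓ)
    (b y w u : ℤ)
    (hb : b = (x + 2 ^ (ℓ - 2)) % 2 ^ ℓ)
    (hy : y = (b + r) % 2 ^ ℓ)
    (hw : w = if (r / 2 ^ (ℓ - 1)) % 2 = 1 ∧ (y / 2 ^ (ℓ - 1)) % 2 = 0 then 1 else 0)
    (hu : u = (y - r + w * 2 ^ ℓ) % 2 ^ ℓ') :
    (u - 2 ^ (ℓ - 2)) % 2 ^ ℓ' = x % 2 ^ ℓ' := by
  obtain ⟨k, rfl⟩ : ∃ k, ℓ = k + 2 := ⟨ℓ - 2, by omega⟩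
  have hpow_ℓ : (2 : ℤ) ^ (k + 2) = 2 * 2 ^ (k + 1) := by ring
  have hpow_msb : (2 : ℤ) ^ (k + 1) = 2 * 2 ^ k := by ring
  have hpow_ℓ' : (2 : ℤ) ^ (k + 2) < 2 ^ ℓ' := pow_lt_pow_right₀ one_lt_two hℓ
  have hbias : (0 : ℤ) < 2 ^ k := by positivity
  simp only [Nat.add_sub_cancel] at hx hb hw
  rw [show k + 2 - 1 = k + 1 by omega] at hw
  have hb_eq : b = x + 2 ^ k := by
    rw [hb]
    exact Int.emod_eq_of_lt (by omega) (by omega)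
  have hunmask : y - r + w * 2 ^ (k + 2) = b := by
    rw [hw, hy, hpow_ℓ]
    exact Int.emod_sub_add_wrap_eq (by positivity) (by omega) (by omega) hr.1 (by omega)
  have hu_eq : u = b := by
    rw [hu, hunmask]
    exact Int.emod_eq_of_lt (by omega) (by omega)
  rw [hu_eq, hb_eq, Nat.add_sub_cancel, add_sub_cancel_right]
end
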